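/- Let X_1, ..., X_m be identically distributed real-valued random variables that are positively associated (i.e., satisfy the FKG inequality: E[fg] ≥ E[f]E[g] for all increasing bounded measurable functions f, g of (X_1,...,X_m)). Then for every N ≥ 0, P(X_1 ≤ N) ≤ P(X_1 + ... + X_m ≤ mN)^{1/m}. -/

import Mathlib

/-!
Indicators of lower sets of `ℝ^m` are antitone, so positive association (applied to the negated
indicators) makes preimages of lower sets under `X = (X₁, …, X_m)` positively correlated. By
induction, `P(∀ i, X_i ≤ N) ≥ ∏ i, P(X_i ≤ N) = P(X₁ ≤ N)^m`, and the event `∀ i, X_i ≤ N` forces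
`X₁ + ⋯ + X_m ≤ mN`.
-/

open MeasureTheory ProbabilityTheory

def PositivelyAssociated {ι Ω : Type*} [MeasurableSpace Ω] (X : ι → Ω → ℝ) (μ : Measure Ω) :
    Prop :=
  ∀ f g : (ι → ℝ) → ℝ, Measurable f → Measurable g →
    (∃ C, ∀ v, |f v| ≤ C) → (∃ C, ∀ v, |g v| ≤ C) →
    Monotone f → Monotone g →
    (∫ ω, f (fun i => X i ω) ∂μ) * ∫ ω, g (fun i => X i ω) ∂μ ≤
      ∫ ω, f (fun i => X i ω) * g (fun i => X i ω) ∂μ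

lemma abs_indicator_one_le {α : Type*} (s : Set α) (v : α) : |s.indicator (1 : α → ℝ) v| ≤ 1 := by
  by_cases hv : v ∈ s <;> simp [hv]

lemma IsLowerSet.antitone_indicator_one {α : Type*} [Preorder α] {s : Set α}
    (hs : IsLowerSet s) : Antitone (s.indicator (1 : α → ℝ)) := by
  intro v w hvw
  by_cases hw : w ∈ s
  · simp [hw, hs hvw hw]
  · simp only [Set.indicator_of_notMem hw]
    exact Set.indicator_nonneg (fun _ _ => zero_le_one) v

namespace PositivelyAssociated

variable {ι Ω : Type*} [MeasurableSpace Ω] {μ : Measure Ω} {X : ι → Ω → ℝ}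

theorem integral_mul_ge_of_antitone (hX : PositivelyAssociated X μ) {f g : (ι → ℝ) → ℝ}
    (hf : Measurable f) (hg : Measurable g)
    (hfb : ∃ C, ∀ v, |f v| ≤ C) (hgb : ∃ C, ∀ v, |g v| ≤ C)
    (hfa : Antitone f) (hga : Antitone g) :
    (∫ ω, f (fun i => X i ω) ∂μ) * ∫ ω, g (fun i => X i ω) ∂μ ≤
      ∫ ω, f (fun i => X i ω) * g (fun i => X i ω) ∂μ := by
  obtain ⟨Cf, hCf⟩ := hfb
  obtain ⟨Cg, hCg⟩ := hgb
  have h := hX (-f) (-g) hf.neg hg.neg ⟨Cf, by simpa using hCf⟩ ⟨Cg, by simpa using hCg⟩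
    hfa.neg hga.neg
  simpa [integral_neg, neg_mul_neg] using h

theorem measure_mul_le_measure_inter [IsFiniteMeasure μ] (hX : PositivelyAssociated X μ)
    (hmeas : ∀ i, Measurable (X i)) {S T : Set (ι → ℝ)}
    (hSm : MeasurableSet S) (hTm : MeasurableSet T) (hSl : IsLowerSet S) (hTl : IsLowerSet T) :
    μ ((fun ω i => X i ω) ⁻¹' S) * μ ((fun ω i => X i ω) ⁻¹' T) ≤
      μ ((fun ω i => X i ω) ⁻¹' (S ∩ T)) := by
  have hV : Measurable fun ω i => X i ω := measurable_pi_lambda _ hmeas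
  have integral_indicator {U : Set (ι → ℝ)} (hU : MeasurableSet U) :
      ∫ ω, U.indicator 1 (fun i => X i ω) ∂μ = μ.real ((fun ω i => X i ω) ⁻¹' U) :=
    integral_indicator_one (hV hU)
  have hcorr := hX.integral_mul_ge_of_antitone (measurable_one.indicator hSm)
    (measurable_one.indicator hTm) ⟨1, abs_indicator_one_le S⟩ ⟨1, abs_indicator_one_le T⟩
    hSl.antitone_indicator_one hTl.antitone_indicator_one
  have hinter (v : ι → ℝ) :
      S.indicator 1 v * T.indicator 1 v = (S ∩ T).indicator (1 : (ι → ℝ) → ℝ) v := by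
    rw [Set.inter_indicator_one]; rfl
  simp_rw [hinter, integral_indicator hSm, integral_indicator hTm,
    integral_indicator (hSm.inter hTm), measureReal_def, ← ENNReal.toReal_mul] at hcorr
  exact (ENNReal.toReal_le_toReal (by finiteness) (by finiteness)).mp hcorr

theorem prod_measure_le_measure_iInter [IsProbabilityMeasure μ] (hX : PositivelyAssociated X μ)
    (hmeas : ∀ i, Measurable (X i)) {κ : Type*} (s : Finset κ) {S : κ → Set (ι → ℝ)}
    (hSm : ∀ k, MeasurableSet (S k)) (hSl : ∀ k, IsLowerSet (S k)) :
    ∏ k ∈ s, μ ((fun ω i => X i ω) ⁻¹' S k) ≤ μ ((fun ω i => X i ω) ⁻¹' ⋂ k ∈ s, S k) := by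
  classical
  induction s using Finset.induction with
  | empty => simp
  | @insert k s hk ih =>
    rw [Finset.prod_insert hk, Finset.set_biInter_insert]
    calc μ ((fun ω i => X i ω) ⁻¹' S k) * ∏ k ∈ s, μ ((fun ω i => X i ω) ⁻¹' S k)
        ≤ μ ((fun ω i => X i ω) ⁻¹' S k) * μ ((fun ω i => X i ω) ⁻¹' ⋂ k ∈ s, S k) := by
          gcongr
      _ ≤ μ ((fun ω i => X i ω) ⁻¹' (S k ∩ ⋂ k ∈ s, S k)) :=
          hX.measure_mul_le_measure_inter hmeas (hSm k)
            (Finset.measurableSet_biInter s fun k _ => hSm k) (hSl k)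
            (isLowerSet_iInter₂ fun k _ => hSl k)

end PositivelyAssociated

theorem stmt0_general {Ω : Type*} [MeasureSpace Ω] [IsProbabilityMeasure (ℙ : Measure Ω)]
    (m : ℕ) (hm : 0 < m) (X : Fin m → Ω → ℝ)
    (hmeas : ∀ i, Measurable (X i))
    (hident : ∀ i, Measure.map (X i) ℙ = Measure.map (X ⟨0, hm⟩) ℙ)
    (hFKG : ∀ f g : (Fin m → ℝ) → ℝ, Measurable f → Measurable g →
      (∃ C, ∀ v, |f v| ≤ C) → (∃ C, ∀ v, |g v| ≤ C) →
      Monotone f → Monotone g →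
      (∫ ω, f (fun i => X i ω) ∂ℙ) * ∫ ω, g (fun i => X i ω) ∂ℙ ≤
        ∫ ω, f (fun i => X i ω) * g (fun i => X i ω) ∂ℙ)
    (N : ℝ) :
    ℙ {ω | X ⟨0, hm⟩ ω ≤ N} ≤ (ℙ {ω | ∑ i, X i ω ≤ m * N}) ^ (1 / (m : ℝ)) := by
  have hprod := PositivelyAssociated.prod_measure_le_measure_iInter hFKG hmeas Finset.univ
    (S := fun i => {v | v i ≤ N})
    (fun i => measurableSet_le (measurable_pi_apply i) measurable_const)
    (fun i => (isLowerSet_Iic N).preimage (Function.monotone_eval i))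
  have hmarginal (i : Fin m) : ℙ {ω | X i ω ≤ N} = ℙ {ω | X ⟨0, hm⟩ ω ≤ N} := by
    have h := congrArg (· (Set.Iic N)) (hident i)
    simp only [Measure.map_apply (hmeas _) measurableSet_Iic] at h
    exact h
  have hsum : (fun ω i => X i ω) ⁻¹' ⋂ i ∈ Finset.univ, {v | v i ≤ N} ⊆
      {ω | ∑ i, X i ω ≤ m * N} := fun ω hω => by
    simpa using Finset.sum_le_sum (s := Finset.univ) (f := fun i => X i ω) (g := fun _ => N)
      fun i _ => Set.mem_iInter₂.mp hω i (Finset.mem_univ i)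
  rw [one_div, ENNReal.le_rpow_inv_iff (by positivity), ENNReal.rpow_natCast]
  calc ℙ {ω | X ⟨0, hm⟩ ω ≤ N} ^ m = ∏ i : Fin m, ℙ {ω | X i ω ≤ N} := by
        simp [hmarginal]
    _ ≤ ℙ {ω | ∑ i, X i ω ≤ m * N} := hprod.trans (measure_mono hsum)

/-- Positive association (FKG) implies `P(X₁ ≤ N) ≤ P(X₁+⋯+X_m ≤ mN)^{1/m}`
for identically distributed random variables. -/
theorem stmt0 {Ω : Type*} [MeasureSpace Ω] [IsProbabilityMeasure (ℙ : Measure Ω)]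
    (m : ℕ) (hm : 0 < m) (X : Fin m → Ω → ℝ)
    (hmeas : ∀ i, Measurable (X i))
    (hident : ∀ i, Measure.map (X i) ℙ = Measure.map (X ⟨0, hm⟩) ℙ)
    (hFKG : ∀ f g : (Fin m → ℝ) → ℝ, Measurable f → Measurable g →
      (∃ C, ∀ v, |f v| ≤ C) → (∃ C, ∀ v, |g v| ≤ C) →
      Monotone f → Monotone g →
      (∫ ω, f (fun i => X i ω) ∂ℙ) * ∫ ω, g (fun i => X i ω) ∂ℙ ≤
        ∫ ω, f (fun i => X i ω) * g (fun i => X i ω) ∂ℙ)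
    (N : ℝ) (hN : 0 ≤ N) :
    ℙ {ω | X ⟨0, hm⟩ ω ≤ N} ≤ (ℙ {ω | ∑ i, X i ω ≤ m * N}) ^ (1 / (m : ℝ)) :=
  stmt0_general m hm X hmeas hident hFKG N
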